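/- Let X be a connected topological space, S₀ ⊆ X a connected subset, and S a connected component of X \ S₀. Then X \ S is connected. -/
import Mathlib

private lemma kur_aux {X : Type*} [TopologicalSpace X] [ConnectedSpace X]
    {K u v p q : Set X} (hu : IsOpen u) (hv : IsOpen v)
    (hcov : Kᶜ ⊆ u ∪ v) (hdisj : Kᶜ ∩ u ∩ v = ∅)
    (hp : IsOpen p) (_hq : IsOpen q)
    (hcov2 : K ∪ (Kᶜ ∩ v) ⊆ p ∪ q)
    (hne : K.Nonempty)
    (hKp : K ⊆ p) (hBq : ((Kᶜ ∩ v) ∩ q).Nonempty)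
    (hempty : (K ∪ (Kᶜ ∩ v)) ∩ (p ∩ q) = ∅) : False := by
  obtain ⟨z, hz1, hz2⟩ := isPreconnected_univ (p ∪ u) (q ∩ v) (hp.union hu) (_hq.inter hv)
    (by
      intro y _
      by_cases hyK : y ∈ K
      · exact Or.inl (Or.inl (hKp hyK))
      · rcases hcov hyK with hyu | hyv
        · exact Or.inl (Or.inr hyu)
        · rcases hcov2 (Or.inr ⟨hyK, hyv⟩) with hyp | hyq
          · exact Or.inl (Or.inl hyp)
          · exact Or.inr ⟨hyq, hyv⟩)
    ⟨hne.choose, trivial, Or.inl (hKp hne.choose_spec)⟩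
    ⟨hBq.choose, trivial, hBq.choose_spec.2, hBq.choose_spec.1.2⟩
  obtain ⟨hzq, hzv⟩ := hz2.2
  by_cases hzK : z ∈ K
  · exact Set.eq_empty_iff_forall_notMem.mp hempty z ⟨Or.inl hzK, hKp hzK, hzq⟩
  · rcases hz2.1 with hzp | hzu
    · exact Set.eq_empty_iff_forall_notMem.mp hempty z ⟨Or.inr ⟨hzK, hzv⟩, hzp, hzq⟩
    · exact Set.eq_empty_iff_forall_notMem.mp hdisj z ⟨⟨hzK, hzu⟩, hzv⟩

private lemma kur_union {X : Type*} [TopologicalSpace X] [ConnectedSpace X]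
    {K u v : Set X} (hK : IsPreconnected K) (hne : K.Nonempty)
    (hu : IsOpen u) (hv : IsOpen v)
    (hcov : Kᶜ ⊆ u ∪ v) (hdisj : Kᶜ ∩ u ∩ v = ∅) :
    IsPreconnected (K ∪ (Kᶜ ∩ v)) := by
  intro p q hp hq hcov2 ⟨a, haU, hap⟩ ⟨b, hbU, hbq⟩
  by_contra h
  have hempty : (K ∪ (Kᶜ ∩ v)) ∩ (p ∩ q) = ∅ := Set.not_nonempty_iff_eq_empty.mp h
  have hKsub : K ⊆ p ∪ q := (Set.subset_union_left).trans hcov2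
  by_cases hKp : (K ∩ p).Nonempty
  · by_cases hKq : (K ∩ q).Nonempty
    · obtain ⟨z, hz⟩ := hK p q hp hq hKsub hKp hKq
      exact h ⟨z, Or.inl hz.1, hz.2⟩
    · -- K ∩ q = ∅, so K ⊆ p
      have hKsubp : K ⊆ p := fun y hy => (hKsub hy).resolve_right
        (fun hyq => hKq ⟨y, hy, hyq⟩)
      have hBq : ((Kᶜ ∩ v) ∩ q).Nonempty := by
        rcases hbU with hbK | hbB
        · exact absurd ⟨b, hbK, hbq⟩ hKq
        · exact ⟨b, hbB, hbq⟩
      exact kur_aux hu hv hcov hdisj hp hq hcov2 hne hKsubp hBq hempty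
  · -- K ∩ p = ∅, so K ⊆ q; swap p and q
    have hKsubq : K ⊆ q := fun y hy => (hKsub hy).resolve_left
      (fun hyp => hKp ⟨y, hy, hyp⟩)
    have hBp : ((Kᶜ ∩ v) ∩ p).Nonempty := by
      rcases haU with haK | haB
      · exact absurd ⟨a, haK, hap⟩ hKp
      · exact ⟨a, haB, hap⟩
    exact kur_aux hu hv hcov hdisj hq hp (by rwa [Set.union_comm q p]) hne hKsubq hBp
      (by rwa [Set.inter_comm q p])

/-- Kuratowski: in a connected space `X`, if `S₀` is connected and `S` is a connected
component of `X \ S₀`, then `X \ S` is connected. -/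
theorem compl_connectedComponentIn_connected {X : Type*} [TopologicalSpace X]
    [ConnectedSpace X] (S₀ : Set X) (hconn : IsPreconnected S₀)
    (x : X) (hx : x ∉ S₀) :
    IsPreconnected (connectedComponentIn S₀ᶜ x)ᶜ := by
  set K := connectedComponentIn S₀ᶜ x with hKdef
  have hK : IsPreconnected K := isPreconnected_connectedComponentIn
  have hxK : x ∈ K := mem_connectedComponentIn hx
  have hne : K.Nonempty := ⟨x, hxK⟩
  have hKsub : K ⊆ S₀ᶜ := connectedComponentIn_subset _ _
  intro u v hu hv hcov ⟨a, haK, hau⟩ ⟨b, hbK, hbv⟩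
  by_contra h
  have hdisj : Kᶜ ∩ u ∩ v = ∅ := by
    rw [Set.eq_empty_iff_forall_notMem]
    rintro z ⟨⟨hz1, hz2⟩, hz3⟩
    exact h ⟨z, hz1, hz2, hz3⟩
  have hS₀K : S₀ ⊆ Kᶜ := fun y hy hyK => hKsub hyK hy
  -- S₀ cannot meet both u and v
  by_cases hSv : (S₀ ∩ v).Nonempty
  · by_cases hSu : (S₀ ∩ u).Nonempty
    · obtain ⟨z, hz⟩ := hconn u v hu hv (fun y hy => hcov (hS₀K hy)) hSu hSv
      exact h ⟨z, hS₀K hz.1, hz.2⟩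
    · -- S₀ ∩ u = ∅ : use B = Kᶜ ∩ u, swap u and v
      have hdisj' : Kᶜ ∩ v ∩ u = ∅ := by
        rw [Set.inter_assoc, Set.inter_comm v u, ← Set.inter_assoc]; exact hdisj
      have hP : IsPreconnected (K ∪ (Kᶜ ∩ u)) :=
        kur_union hK hne hv hu (by rwa [Set.union_comm v u]) hdisj'
      have hsub : K ∪ (Kᶜ ∩ u) ⊆ S₀ᶜ := by
        rintro y (hyK | ⟨_, hyu⟩)
        · exact hKsub hyK
        · exact fun hyS => hSu ⟨y, hyS, hyu⟩
      have := hP.subset_connectedComponentIn (Or.inl hxK) hsub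
      exact haK (this (Or.inr ⟨haK, hau⟩))
  · -- S₀ ∩ v = ∅ : use B = Kᶜ ∩ v
    have hP : IsPreconnected (K ∪ (Kᶜ ∩ v)) := kur_union hK hne hu hv hcov hdisj
    have hsub : K ∪ (Kᶜ ∩ v) ⊆ S₀ᶜ := by
      rintro y (hyK | ⟨_, hyv⟩)
      · exact hKsub hyK
      · exact fun hyS => hSv ⟨y, hyS, hyv⟩
    have := hP.subset_connectedComponentIn (Or.inl hxK) hsub
    exact hbK (this (Or.inr ⟨hbK, hbv⟩))
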